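/- arXiv:2103.02153 — 3 statements merged into one kernel-verified Lean document; each statement's English description precedes it below -/
import Mathlib

section
/- Let P be a subfield of F_q and suppose φ, θ are orthomorphisms of P with H(φ,θ) = 3, where q is odd (so 2 is invertible). Define f(x) = 2x for x ∉ P and f(x) = φ(x) for x ∈ P, and define g analogously using θ. Then f and g are orthomorphisms of F_q with H(f,g) = 3. -/
def IsOrthomorphism {K : Type*} [Field K] (θ : K → K) : Prop :=
  Function.Bijective θ ∧ Function.Bijective fun x => θ x - x

private lemma ext_bij {F : Type*} [Field F] [Fintype F] (P : Subfield F)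
    (ψ : P → P) (hψ : Function.Bijective ψ) (c : F) (hc : c ≠ 0) (hcP : c ∈ P)
    (f : F → F) (h1 : ∀ (x : F) (h : x ∈ P), f x = ↑(ψ ⟨x, h⟩))
    (h2 : ∀ x : F, x ∉ P → f x = c * x) : Function.Bijective f := by
  rw [Finite.injective_iff_bijective.symm]
  intro x y hxy
  by_cases hx : x ∈ P <;> by_cases hy : y ∈ P
  · rw [h1 x hx, h1 y hy] at hxy
    have := hψ.1 (Subtype.coe_injective hxy)
    exact congrArg Subtype.val this
  · exfalso
    rw [h1 x hx, h2 y hy] at hxy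
    apply hy
    have : c * y ∈ P := hxy ▸ (ψ ⟨x, hx⟩).2
    have : c⁻¹ * (c * y) ∈ P := P.mul_mem (P.inv_mem hcP) this
    rwa [inv_mul_cancel_left₀ hc] at this
  · exfalso
    rw [h2 x hx, h1 y hy] at hxy
    apply hx
    have : c * x ∈ P := hxy.symm ▸ (ψ ⟨y, hy⟩).2
    have : c⁻¹ * (c * x) ∈ P := P.mul_mem (P.inv_mem hcP) this
    rwa [inv_mul_cancel_left₀ hc] at this
  · rw [h2 x hx, h2 y hy] at hxy
    exact mul_left_cancel₀ hc hxy

/-- Extending a pair of orthomorphisms of a subfield at Hamming distance 3 by the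
map `x ↦ 2x` outside the subfield yields orthomorphisms of the big field at
Hamming distance 3 (for odd q). -/
theorem orth_subfield_extend {F : Type*} [Field F] [Fintype F]
    (hodd : Odd (Fintype.card F)) (P : Subfield F)
    (φ θ : P → P) (hφ : IsOrthomorphism φ) (hθ : IsOrthomorphism θ)
    (hH : {a : P | φ a ≠ θ a}.ncard = 3)
    (f g : F → F)
    (hf1 : ∀ (x : F) (h : x ∈ P), f x = ↑(φ ⟨x, h⟩))
    (hf2 : ∀ x : F, x ∉ P → f x = 2 * x)
    (hg1 : ∀ (x : F) (h : x ∈ P), g x = ↑(θ ⟨x, h⟩))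
    (hg2 : ∀ x : F, x ∉ P → g x = 2 * x) :
    IsOrthomorphism f ∧ IsOrthomorphism g ∧ {a : F | f a ≠ g a}.ncard = 3 := by
  have h2ne : (2 : F) ≠ 0 := by
    intro h
    have hchar : ringChar F = 2 := by
      have := CharP.ringChar_of_prime_eq_zero Nat.prime_two h
      exact this
    have := FiniteField.even_card_of_char_two hchar
    rw [Nat.odd_iff] at hodd
    omega
  have orth : ∀ (ψ : P → P), IsOrthomorphism ψ → ∀ f : F → F,
      (∀ (x : F) (h : x ∈ P), f x = ↑(ψ ⟨x, h⟩)) → (∀ x : F, x ∉ P → f x = 2 * x) →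
      IsOrthomorphism f := by
    intro ψ hψ f h1 h2
    constructor
    · exact ext_bij P ψ hψ.1 2 h2ne (by rw [show (2:F) = 1+1 by norm_num]; exact P.add_mem P.one_mem P.one_mem) f h1 h2
    · refine ext_bij P (fun a => ψ a - a) hψ.2 1 one_ne_zero P.one_mem _ ?_ ?_
      · intro x hx
        simp only [h1 x hx]
        push_cast
        ring
      · intro x hx
        rw [h2 x hx]; ring
  refine ⟨orth φ hφ f hf1 hf2, orth θ hθ g hg1 hg2, ?_⟩
  have hset : {a : F | f a ≠ g a} = Subtype.val '' {a : P | φ a ≠ θ a} := by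
    ext a
    simp only [Set.mem_setOf_eq, Set.mem_image]
    constructor
    · intro ha
      by_cases h : a ∈ P
      · refine ⟨⟨a, h⟩, ?_, rfl⟩
        intro heq
        exact ha (by rw [hf1 a h, hg1 a h, heq])
      · exact absurd (by rw [hf2 a h, hg2 a h]) ha
    · rintro ⟨⟨a, h⟩, hne, rfl⟩
      rw [hf1 a h, hg1 a h]
      exact fun he => hne (Subtype.coe_injective he)
  rw [hset, Set.ncard_image_of_injective _ Subtype.coe_injective, hH]
end

section
/- Let q = 2^r with r ≥ 3, let a ∈ F_q \ {0,1}, set H = {0, 1, a, a+1}, and let c ∈ F_q \ H. Then the map θ_a defined by θ_a(x) = ax + a(a+1) if x ∈ H + c and θ_a(x) = ax otherwise is an orthomorphism of F_q with θ_a(0) = 0. -/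
/-- For `q = 2^r`, `r ≥ 3`, `a ∉ {0,1}`, `H = {0,1,a,a+1}` and `c ∉ H`, the map
`θ_a` equal to `ax + a(a+1)` on the coset `H + c` and `ax` elsewhere is an
orthomorphism fixing 0. -/
theorem orth_char_two {F : Type*} [Field F] [Fintype F]
    (r : ℕ) (hr : 3 ≤ r) (hcard : Fintype.card F = 2 ^ r)
    (a : F) (ha0 : a ≠ 0) (ha1 : a ≠ 1)
    (c : F) (hc : c ∉ ({0, 1, a, a + 1} : Set F))
    (θ : F → F)
    (hθ1 : ∀ x ∈ ({c, c + 1, c + a, c + a + 1} : Set F), θ x = a * x + a * (a + 1))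
    (hθ2 : ∀ x ∉ ({c, c + 1, c + a, c + a + 1} : Set F), θ x = a * x) :
    IsOrthomorphism θ ∧ θ 0 = 0 := by
  classical
  obtain ⟨n, hp, hn⟩ := FiniteField.card F (ringChar F)
  have hchar2 : ringChar F = 2 := by
    have hdvd : ringChar F ∣ 2 ^ r := by
      rw [hcard] at hn
      exact hn ▸ dvd_pow_self _ (by positivity)
    exact (Nat.prime_dvd_prime_iff_eq hp Nat.prime_two).mp (hp.dvd_of_dvd_pow hdvd)
  have two : (2 : F) = 0 := by
    have h := CharP.cast_eq_zero F (ringChar F)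
    rw [hchar2] at h
    exact_mod_cast h
  simp only [Set.mem_insert_iff, Set.mem_singleton_iff, not_or] at hc
  obtain ⟨hc0, hc1, hca, hca1⟩ := hc
  set S : Set F := {c, c + 1, c + a, c + a + 1} with hS
  have memS : ∀ x, x ∈ S ↔ x = c ∨ x = c + 1 ∨ x = c + a ∨ x = c + a + 1 := by
    intro x; simp [hS]
  have hcloseA : ∀ x ∈ S, x + a ∈ S := by
    intro x hx; rw [memS] at hx ⊢
    rcases hx with rfl | rfl | rfl | rfl
    · right; right; left; ring
    · right; right; right; ring
    · left; linear_combination a * two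
    · right; left; linear_combination a * two
  have hcloseA1 : ∀ x ∈ S, x + (a + 1) ∈ S := by
    intro x hx; rw [memS] at hx ⊢
    rcases hx with rfl | rfl | rfl | rfl
    · right; right; right; ring
    · right; right; left; linear_combination two
    · right; left; linear_combination a * two
    · left; linear_combination (a + 1) * two
  have h0S : (0 : F) ∉ S := by
    rw [memS]
    rintro (h | h | h | h)
    · exact hc0 h.symm
    · exact hc1 (by linear_combination -h - two)
    · exact hca (by linear_combination -h - a * two)
    · exact hca1 (by linear_combination -h - (a + 1) * two)
  have ha1' : a + 1 ≠ 0 := by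
    intro h; exact ha1 (by linear_combination h - two)
  have key : ∀ m d : F, m ≠ 0 → m * d = a * (a + 1) → (∀ x ∈ S, x + d ∈ S) →
      Function.Injective (fun x => m * x + (if x ∈ S then a * (a + 1) else 0)) := by
    intro m d hm hmd hcl x y h
    simp only at h
    by_cases hx : x ∈ S <;> by_cases hy : y ∈ S
    · rw [if_pos hx, if_pos hy] at h
      exact mul_left_cancel₀ hm (by linear_combination h)
    · rw [if_pos hx, if_neg hy] at h
      exfalso; apply hy
      have : y = x + d := by
        apply mul_left_cancel₀ hm; linear_combination -h - hmd
      rw [this]; exact hcl x hx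
    · rw [if_neg hx, if_pos hy] at h
      exfalso; apply hx
      have : x = y + d := by
        apply mul_left_cancel₀ hm; linear_combination h - hmd
      rw [this]; exact hcl y hy
    · rw [if_neg hx, if_neg hy] at h
      exact mul_left_cancel₀ hm (by linear_combination h)
  have hθeq : ∀ x, θ x = a * x + (if x ∈ S then a * (a + 1) else 0) := by
    intro x
    by_cases hx : x ∈ S
    · rw [hθ1 x hx, if_pos hx]
    · rw [hθ2 x hx, if_neg hx, add_zero]
  refine ⟨⟨Finite.injective_iff_bijective.mp ?_, Finite.injective_iff_bijective.mp ?_⟩, ?_⟩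
  · have h1 := key a (a + 1) ha0 rfl hcloseA1
    intro x y h
    apply h1
    simp only
    rw [← hθeq, ← hθeq]; exact h
  · have h1 := key (a + 1) a ha1' (by ring) hcloseA
    intro x y h
    apply h1
    simp only at h ⊢
    rw [hθeq x, hθeq y] at h
    by_cases hxS : x ∈ S <;> by_cases hyS : y ∈ S
    · rw [if_pos hxS, if_pos hyS] at h ⊢; linear_combination h + (x - y) * two
    · rw [if_pos hxS, if_neg hyS] at h ⊢; linear_combination h + (x - y) * two
    · rw [if_neg hxS, if_pos hyS] at h ⊢; linear_combination h + (x - y) * two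
    · rw [if_neg hxS, if_neg hyS] at h ⊢; linear_combination h + (x - y) * two
  · rw [hθ2 0 h0S, mul_zero]
end

section
/- If there exist orthomorphisms f, g of F_q (q > 3) at Hamming distance exactly 3, then there exists an orthomorphism of F_q whose reduced polynomial has degree exactly q - 3. -/
/-! Two reduced orthomorphism polynomials `p_f ≠ p_g` that agree on the `q - 3` points where
`f = g` force `max (deg p_f) (deg p_g) ≥ q - 3`; the degree bound `≤ q - 3` makes this an equality
for one of them. -/

open Polynomial Finset

theorem Polynomial.exists_natDegree_lt_card_eval_eq {F : Type*} [Field F] [Fintype F]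
    (θ : F → F) : ∃ p : F[X], p.natDegree < Fintype.card F ∧ ∀ x, p.eval x = θ x := by
  classical
  have hinj : Set.InjOn id (↑(univ : Finset F) : Set F) := Function.injective_id.injOn
  refine ⟨Lagrange.interpolate univ id θ, ?_, fun x ↦ ?_⟩
  · rcases eq_or_ne (Lagrange.interpolate univ id θ) 0 with h0 | h0
    · simpa [h0] using Fintype.card_pos
    · have := Lagrange.degree_interpolate_lt θ hinj
      rwa [← natDegree_lt_iff_degree_lt h0, card_univ] at this
  · simpa using Lagrange.eval_interpolate_at_node θ hinj (mem_univ x)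

theorem Polynomial.card_le_max_natDegree_of_eval_eq {R : Type*} [CommRing R] [IsDomain R]
    {p r : R[X]} (hpr : p ≠ r) (s : Finset R) (h : ∀ x ∈ s, p.eval x = r.eval x) :
    #s ≤ max p.natDegree r.natDegree := by
  by_contra! hlt
  refine hpr (eq_of_degree_sub_lt_of_eval_finset_eq s ?_ h)
  calc (p - r).degree ≤ (p - r).natDegree := degree_le_natDegree
    _ ≤ max p.natDegree r.natDegree := by exact_mod_cast natDegree_sub_le p r
    _ < #s := by exact_mod_cast hlt

theorem card_filter_eq_eq_card_sub_ncard_ne {α β : Type*} [Fintype α] (f g : α → β)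
    [DecidablePred fun a ↦ f a = g a] :
    #{a | f a = g a} = Fintype.card α - {a | f a ≠ g a}.ncard := by
  have := card_filter_add_card_filter_not (s := univ) fun a ↦ f a = g a
  rw [Set.ncard_eq_toFinset_card', Set.toFinset_ofPred, ← card_univ, ← this]
  simp only [ne_eq]
  convert (Nat.add_sub_cancel ..).symm

theorem exists_orth_deg_q_sub_three_general {F : Type*} [Field F] [Fintype F]
    (hbound : ∀ p : Polynomial F, p.natDegree < Fintype.card F →
      Function.Bijective (fun x => p.eval x) →
      Function.Bijective (fun x => p.eval x - x) →
      p.natDegree ≤ Fintype.card F - 3)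
    (f g : F → F) (hf : IsOrthomorphism f) (hg : IsOrthomorphism g)
    (hH : {a : F | f a ≠ g a}.ncard = 3) :
    ∃ θ : F → F, IsOrthomorphism θ ∧ ∃ p : Polynomial F,
      p.natDegree < Fintype.card F ∧ (∀ x : F, p.eval x = θ x) ∧
      p.natDegree = Fintype.card F - 3 := by
  classical
  have reduced (θ : F → F) (hθ : IsOrthomorphism θ) : ∃ p : F[X], p.natDegree < Fintype.card F ∧
      (∀ x, p.eval x = θ x) ∧ p.natDegree ≤ Fintype.card F - 3 := by
    obtain ⟨p, hp, hpθ⟩ := exists_natDegree_lt_card_eval_eq θ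
    exact ⟨p, hp, hpθ, hbound p hp (by simpa only [hpθ] using hθ.1)
      (by simpa only [hpθ] using hθ.2)⟩
  obtain ⟨pf, hpf, hpfe, hbf⟩ := reduced f hf
  obtain ⟨pg, hpg, hpge, hbg⟩ := reduced g hg
  have hne : pf ≠ pg := by
    obtain ⟨a, ha⟩ := Set.nonempty_of_ncard_ne_zero (s := {a | f a ≠ g a}) (by omega)
    rintro rfl
    exact ha (by rw [← hpfe, hpge])
  have hmax := card_le_max_natDegree_of_eval_eq hne {a | f a = g a} (by simp [hpfe, hpge])
  rw [card_filter_eq_eq_card_sub_ncard_ne, hH] at hmax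
  rcases le_max_iff.mp hmax with h | h
  · exact ⟨f, hf, pf, hpf, hpfe, le_antisymm hbf h⟩
  · exact ⟨g, hg, pg, hpg, hpge, le_antisymm hbg h⟩

/-- If there are orthomorphisms of `F_q` (q > 3) at Hamming distance exactly 3,
then some orthomorphism of `F_q` has reduced polynomial of degree exactly `q - 3`.
The Niederreiter–Robinson–Wan degree bound is assumed as a hypothesis. -/
theorem exists_orth_deg_q_sub_three {F : Type*} [Field F] [Fintype F]
    (hq : 3 < Fintype.card F)
    (hbound : ∀ p : Polynomial F, p.natDegree < Fintype.card F →
      Function.Bijective (fun x => p.eval x) →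
      Function.Bijective (fun x => p.eval x - x) →
      p.natDegree ≤ Fintype.card F - 3)
    (f g : F → F) (hf : IsOrthomorphism f) (hg : IsOrthomorphism g)
    (hH : {a : F | f a ≠ g a}.ncard = 3) :
    ∃ θ : F → F, IsOrthomorphism θ ∧ ∃ p : Polynomial F,
      p.natDegree < Fintype.card F ∧ (∀ x : F, p.eval x = θ x) ∧
      p.natDegree = Fintype.card F - 3 :=
  exists_orth_deg_q_sub_three_general hbound f g hf hg hH
end
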